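/- Let L be a Lie algebra over a commutative ring, let p ≥ 1, and let X₁, …, X_p, Y ∈ L. Then there exist an integer m with 1 ≤ m ≤ 2^p, signs ε₁, …, ε_m ∈ {+1, −1}, and permutations σ₁, …, σ_m of {1, …, p} such that [[X₁, …, X_p], Y] = Σ_{r=1}^{m} ε_r · [X_{σ_r(1)}, X_{σ_r(2)}, …, X_{σ_r(p)}, Y], where each bracket expression is right-nested. -/
import Mathlib

/-- The right-nested iterated Lie bracket `[X₁, …, X_j]` of a list of elements of a Lie
ring: `[X] = X` and `[X₁, …, X_j] = ⁅X₁, [X₂, …, X_j]⁆`. (The empty list is sent to `0`.) -/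
def nestedBracket {L : Type*} [LieRing L] : List L → L
  | [] => 0
  | [a] => a
  | a :: b :: rest => ⁅a, nestedBracket (b :: rest)⁆

lemma nestedBracket_cons {L : Type*} [LieRing L] (a : L) {l : List L} (h : l ≠ []) :
    nestedBracket (a :: l) = ⁅a, nestedBracket l⁆ := by
  cases l with
  | nil => exact absurd rfl h
  | cons b t => rfl

lemma nestedBracket_append_pair {L : Type*} [LieRing L] (l : List L) (a b : L) :
    nestedBracket (l ++ [a, b]) = nestedBracket (l ++ [⁅a, b⁆]) := by
  induction l with
  | nil => rfl
  | cons x t ih =>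
    rw [List.cons_append, List.cons_append,
      nestedBracket_cons x (by simp), nestedBracket_cons x (by simp), ih]

/-- Extend a permutation of `Fin n` to a permutation of `Fin (n+1)` fixing `0`. -/
def permCons {n : ℕ} (e : Equiv.Perm (Fin n)) : Equiv.Perm (Fin (n + 1)) :=
  Equiv.Perm.decomposeFin.symm (0, e)

@[simp] lemma permCons_zero {n : ℕ} (e : Equiv.Perm (Fin n)) : permCons e 0 = 0 := by
  simp [permCons]

@[simp] lemma permCons_succ {n : ℕ} (e : Equiv.Perm (Fin n)) (i : Fin n) :
    permCons e i.succ = (e i).succ := by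
  simp [permCons]

lemma lie_sum' {L : Type*} [LieRing L] {ι : Type*} (s : Finset ι) (x : L) (f : ι → L) :
    ⁅x, ∑ i ∈ s, f i⁆ = ∑ i ∈ s, ⁅x, f i⁆ :=
  map_sum (AddMonoidHom.mk' (fun y => ⁅x, y⁆) (lie_add x)) f s

lemma sum_lie' {L : Type*} [LieRing L] {ι : Type*} (s : Finset ι) (x : L) (f : ι → L) :
    ⁅∑ i ∈ s, f i, x⁆ = ∑ i ∈ s, ⁅f i, x⁆ :=
  map_sum (AddMonoidHom.mk' (fun y => ⁅y, x⁆) (fun a b => add_lie a b x)) f s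

theorem aux_signed_sum {L : Type*} [LieRing L] :
    ∀ (n : ℕ) (X : Fin (n + 1) → L) (Y : L),
    ∃ (m : ℕ), 1 ≤ m ∧ m ≤ 2 ^ (n + 1) ∧
      ∃ (ε : Fin m → ℤ) (σ : Fin m → Equiv.Perm (Fin (n + 1))),
        (∀ r, ε r = 1 ∨ ε r = -1) ∧
        ⁅nestedBracket (List.ofFn X), Y⁆ =
          ∑ r : Fin m, ε r • nestedBracket ((List.ofFn fun i => X (σ r i)) ++ [Y]) := by
  intro n
  induction n with
  | zero =>
    intro X Y
    refine ⟨1, le_refl _, by norm_num, fun _ => 1, fun _ => 1, fun r => Or.inl rfl, ?_⟩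
    simp [nestedBracket, List.ofFn_succ]
  | succ k IH =>
    intro X Y
    set X' : Fin (k + 1) → L := fun j => X j.succ with hX'
    obtain ⟨m₁, hm₁, hm₁', ε₁, σ₁, hε₁, h₁⟩ := IH X' Y
    obtain ⟨m₂, hm₂, hm₂', ε₂, σ₂, hε₂, h₂⟩ := IH X' ⁅X 0, Y⁆
    refine ⟨m₁ + m₂, by omega, ?_, Fin.addCases ε₁ (fun r => -ε₂ r),
      Fin.addCases (fun r => permCons (σ₁ r))
        (fun r => permCons (σ₂ r) * finRotate (k + 2)), ?_, ?_⟩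
    · have : 2 ^ (k + 1 + 1) = 2 ^ (k + 1) + 2 ^ (k + 1) := by ring
      omega
    · intro r
      refine Fin.addCases ?_ ?_ r
      · intro i; simpa using hε₁ i
      · intro i; rcases hε₂ i with h | h <;> simp [h]
    · have hlist : List.ofFn X = X 0 :: List.ofFn X' := by
        rw [List.ofFn_succ]
      have hB : nestedBracket (List.ofFn X) = ⁅X 0, nestedBracket (List.ofFn X')⁆ := by
        rw [hlist, nestedBracket_cons _ (by simp [List.ofFn_succ])]
      rw [hB, lie_lie, h₁, h₂, lie_sum']
      rw [sub_eq_add_neg, ← Finset.sum_neg_distrib]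
      rw [Fin.sum_univ_add]
      congr 1
      · apply Finset.sum_congr rfl
        intro r _
        simp only [Fin.addCases_left]
        rw [lie_zsmul]
        congr 1
        have : (List.ofFn fun i : Fin (k + 2) => X (permCons (σ₁ r) i)) ++ [Y]
            = X 0 :: ((List.ofFn fun j : Fin (k + 1) => X' (σ₁ r j)) ++ [Y]) := by
          rw [List.ofFn_succ]
          simp [hX']
        rw [this, nestedBracket_cons _ (by simp)]
      · apply Finset.sum_congr rfl
        intro r _
        simp only [Fin.addCases_right]
        have hlast : (permCons (σ₂ r) * finRotate (k + 2)) (Fin.last (k + 1)) = 0 := by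
          simp [Equiv.Perm.mul_apply, finRotate_last]
        have hcast : ∀ j : Fin (k + 1),
            (permCons (σ₂ r) * finRotate (k + 2)) j.castSucc = (σ₂ r j).succ := by
          intro j
          have : finRotate (k + 2) j.castSucc = j.succ := by
            rw [finRotate_succ_apply, Fin.coeSucc_eq_succ]
          simp [Equiv.Perm.mul_apply, this]
        have : (List.ofFn fun i : Fin (k + 2) =>
              X ((permCons (σ₂ r) * finRotate (k + 2)) i)) ++ [Y]
            = (List.ofFn fun j : Fin (k + 1) => X' (σ₂ r j)) ++ [X 0, Y] := by
          rw [List.ofFn_succ']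
          simp only [List.concat_eq_append, List.append_assoc, hlast, hcast]
          simp [hX']
        rw [this, nestedBracket_append_pair, neg_smul]

/-- In a Lie algebra `L` over a commutative ring `R`, for `p ≥ 1` and
`X₁, …, X_p, Y ∈ L`, the element `[[X₁, …, X_p], Y]` is a signed sum of at most `2^p`
right-nested brackets of the form `[X_{σ(1)}, …, X_{σ(p)}, Y]` with `σ` a permutation of
`{1, …, p}`. This follows from repeated application of the Jacobi identity. -/
theorem bracket_nestedBracket_eq_signed_sum
    {R L : Type*} [CommRing R] [LieRing L] [LieAlgebra R L]
    (p : ℕ) (hp : 1 ≤ p) (X : Fin p → L) (Y : L) :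
    ∃ (m : ℕ), 1 ≤ m ∧ m ≤ 2 ^ p ∧
      ∃ (ε : Fin m → ℤ) (σ : Fin m → Equiv.Perm (Fin p)),
        (∀ r, ε r = 1 ∨ ε r = -1) ∧
        ⁅nestedBracket (List.ofFn X), Y⁆ =
          ∑ r : Fin m, ε r • nestedBracket ((List.ofFn fun i => X (σ r i)) ++ [Y]) := by
  obtain ⟨n, rfl⟩ : ∃ n, p = n + 1 := ⟨p - 1, by omega⟩
  exact aux_signed_sum n X Y
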